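/- arXiv:2001.02968 — 4 statements merged into one kernel-verified Lean document; each statement's English description precedes it below -/
import Mathlib

section
/- Let f : [0,1]^d → ℝ be continuously differentiable with 1-Lipschitz gradient, let R ⊆ [0,1]^d be an axis-aligned hyperrectangle, x ∈ R, and c ≥ 0. Suppose the unit-speed projected gradient flow x(t) starting at x (dx/dt = −g(x(t))/‖g(x(t))‖ where g is the projected gradient) stays in [0,1]^d and that ‖g(x(t))‖ > c for all t in [0,T] where T is the exit time of R. Then min_{y∈E} f(y) ≤ f(x) − c·dist(x,E), where E is the face of R through which the flow exits. -/
open scoped Classical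

/-- The projected gradient on the unit cube `[0,1]^d`, where `G` is the
gradient field of `f`. -/
noncomputable def projGrad (d : ℕ)
    (G : EuclideanSpace ℝ (Fin d) → EuclideanSpace ℝ (Fin d))
    (x : EuclideanSpace ℝ (Fin d)) : EuclideanSpace ℝ (Fin d) :=
  WithLp.toLp 2 (fun i => if x i = 0 then max 0 (G x i)
    else if x i = 1 then min 0 (G x i) else G x i)

/-!
Along the flow, `(f ∘ γ)' = -⟪∇f, g⟫ / ‖g‖ = -‖g‖ < -c`, because each coordinate of the
projected gradient `g` is either `0` or the corresponding coordinate of `∇f`. Hence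
`f (γ T) ≤ f x₀ - c T`, while the unit speed of `γ` gives `dist x₀ (γ T) ≤ T`; the exit
point `γ T ∈ E` is the required `y`.
-/

open Set

lemma mul_projGrad_apply (d : ℕ) (G : EuclideanSpace ℝ (Fin d) → EuclideanSpace ℝ (Fin d))
    (x : EuclideanSpace ℝ (Fin d)) (i : Fin d) :
    G x i * projGrad d G x i = projGrad d G x i ^ 2 := by
  simp only [projGrad, PiLp.toLp_apply]
  split_ifs <;> rcases le_total (G x i) 0 with h | h <;> simp [h, sq]

lemma inner_projGrad (d : ℕ) (G : EuclideanSpace ℝ (Fin d) → EuclideanSpace ℝ (Fin d))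
    (x : EuclideanSpace ℝ (Fin d)) :
    inner ℝ (G x) (projGrad d G x) = ‖projGrad d G x‖ ^ 2 := by
  rw [← real_inner_self_eq_norm_sq]
  simp only [PiLp.inner_apply, RCLike.inner_apply, conj_trivial]
  exact Finset.sum_congr rfl fun i _ => by rw [mul_comm, mul_projGrad_apply, sq]

lemma HasGradientAt.hasDerivAt_comp_projGrad_flow {d : ℕ}
    {f : EuclideanSpace ℝ (Fin d) → ℝ} {G : EuclideanSpace ℝ (Fin d) → EuclideanSpace ℝ (Fin d)}
    {γ : ℝ → EuclideanSpace ℝ (Fin d)} {t : ℝ} (hf : HasGradientAt f (G (γ t)) (γ t))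
    (hγ : HasDerivAt γ (-(‖projGrad d G (γ t)‖)⁻¹ • projGrad d G (γ t)) t)
    (hg : projGrad d G (γ t) ≠ 0) :
    HasDerivAt (fun s => f (γ s)) (-‖projGrad d G (γ t)‖) t := by
  refine (hf.hasFDerivAt.comp_hasDerivAt t hγ).congr_deriv ?_
  rw [InnerProductSpace.toDual_apply_apply, inner_smul_right, inner_projGrad]
  field_simp [norm_ne_zero_iff.2 hg]

lemma sub_le_mul_sub_of_hasDerivAt_le {h h' : ℝ → ℝ} {a b C : ℝ} (hab : a ≤ b)
    (hh : ∀ t ∈ Icc a b, HasDerivAt h (h' t) t) (hh' : ∀ t ∈ Ioo a b, h' t ≤ C) :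
    h b - h a ≤ C * (b - a) := by
  refine (convex_Icc a b).image_sub_le_mul_sub_of_deriv_le
    (fun t ht => (hh t ht).continuousAt.continuousWithinAt)
    (fun t ht => (hh t (interior_subset ht)).differentiableAt.differentiableWithinAt)
    (fun t ht => ?_) a (left_mem_Icc.2 hab) b (right_mem_Icc.2 hab) hab
  rw [interior_Icc] at ht
  rw [(hh t (Ioo_subset_Icc_self ht)).deriv]
  exact hh' t ht

theorem stmt2_general (d : ℕ) (f : EuclideanSpace ℝ (Fin d) → ℝ)
    (G : EuclideanSpace ℝ (Fin d) → EuclideanSpace ℝ (Fin d))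
    (hG : ∀ x, HasGradientAt f (G x) x)
    (x₀ : EuclideanSpace ℝ (Fin d))
    (c : ℝ) (hc : 0 ≤ c)
    (T : ℝ) (hT : 0 ≤ T)
    (γ : ℝ → EuclideanSpace ℝ (Fin d))
    (hγ0 : γ 0 = x₀)
    (hflow : ∀ t ∈ Set.Icc 0 T,
      HasDerivAt γ (-(‖projGrad d G (γ t)‖)⁻¹ • projGrad d G (γ t)) t)
    (E : Set (EuclideanSpace ℝ (Fin d)))
    (hexit : γ T ∈ E)
    (hbig : ∀ t ∈ Set.Icc 0 T, c < ‖projGrad d G (γ t)‖) :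
    ∃ y ∈ E, f y ≤ f x₀ - c * Metric.infDist x₀ E := by
  refine ⟨γ T, hexit, ?_⟩
  have hg : ∀ t ∈ Icc 0 T, projGrad d G (γ t) ≠ 0 := fun t ht =>
    norm_pos_iff.1 (hc.trans_lt (hbig t ht))
  have hdescent : f (γ T) - f (γ 0) ≤ -c * (T - 0) :=
    sub_le_mul_sub_of_hasDerivAt_le hT
      (fun t ht => (hG _).hasDerivAt_comp_projGrad_flow (hflow t ht) (hg t ht))
      (fun t ht => neg_le_neg (hbig t (Ioo_subset_Icc_self ht)).le)
  have hspeed : ‖γ T - γ 0‖ ≤ 1 * (T - 0) := by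
    refine norm_image_sub_le_of_norm_deriv_le_segment' (fun t ht => (hflow t ht).hasDerivWithinAt)
      (fun t ht => ?_) T (right_mem_Icc.2 hT)
    rw [norm_smul, norm_neg, norm_inv, norm_norm,
      inv_mul_cancel₀ (norm_ne_zero_iff.2 (hg t (Ico_subset_Icc_self ht)))]
  have hdist : Metric.infDist (γ 0) E ≤ T := calc
    Metric.infDist (γ 0) E ≤ ‖γ T - γ 0‖ := by
      rw [← dist_eq_norm, dist_comm]; exact Metric.infDist_le_dist_of_mem hexit
    _ ≤ T := by linarith
  rw [← hγ0]
  linarith [mul_le_mul_of_nonneg_left hdist hc]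

/-- if the unit-speed projected gradient flow started at `x₀`
stays in `[0,1]^d`, remains in the rectangle `R` up to its exit time `T`,
exits through the face `E`, and the projected gradient norm stays `> c`
along the way, then `min_{y ∈ E} f(y) ≤ f(x₀) - c · dist(x₀, E)`. -/
theorem stmt2 (d : ℕ) (f : EuclideanSpace ℝ (Fin d) → ℝ)
    (G : EuclideanSpace ℝ (Fin d) → EuclideanSpace ℝ (Fin d))
    (hG : ∀ x, HasGradientAt f (G x) x)
    (hlip : ∀ x y, ‖G x - G y‖ ≤ ‖x - y‖)
    (a b : Fin d → ℝ) (hab : ∀ i, a i ≤ b i)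
    (R : Set (EuclideanSpace ℝ (Fin d)))
    (hRdef : R = {y : EuclideanSpace ℝ (Fin d) | ∀ i, y i ∈ Set.Icc (a i) (b i)})
    (hRcube : R ⊆ {y : EuclideanSpace ℝ (Fin d) | ∀ i, y i ∈ Set.Icc (0:ℝ) 1})
    (x₀ : EuclideanSpace ℝ (Fin d)) (hx₀ : x₀ ∈ R)
    (c : ℝ) (hc : 0 ≤ c)
    (T : ℝ) (hT : 0 ≤ T)
    (γ : ℝ → EuclideanSpace ℝ (Fin d))
    (hγ0 : γ 0 = x₀)
    (hflow : ∀ t ∈ Set.Icc 0 T,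
      HasDerivAt γ (-(‖projGrad d G (γ t)‖)⁻¹ • projGrad d G (γ t)) t)
    (hcube : ∀ t ∈ Set.Icc 0 T, ∀ i, γ t i ∈ Set.Icc (0:ℝ) 1)
    (hinR : ∀ t ∈ Set.Icc 0 T, γ t ∈ R)
    (k : Fin d) (v : ℝ) (hv : v = a k ∨ v = b k)
    (E : Set (EuclideanSpace ℝ (Fin d)))
    (hEdef : E = {y | y ∈ R ∧ y k = v})
    (hexit : γ T ∈ E)
    (hbig : ∀ t ∈ Set.Icc 0 T, c < ‖projGrad d G (γ t)‖) :
    ∃ y ∈ E, f y ≤ f x₀ - c * Metric.infDist x₀ E :=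
  stmt2_general d f G hG x₀ c hc T hT γ hγ0 hflow E hexit hbig
end

section
/- Let R be an axis-aligned rectangle in ℝ² with aspect ratio at most 3, x ∈ R, E an edge of R with r = dist(x,E) > 0, and for x₀ = x define R_i = R ∩ {y : ‖x_{i−1} − y‖_∞ ≤ r/3} for points x_{i−1} ∈ ∂R_{i−1} (any points with the R_i nonempty rectangles). Then vol(R_i) ≤ (2/3)·vol(R), and R_i has aspect ratio at most 3 (in fact at most 2). -/
/-!
Clipping an interval `[a, b]` to the window `[z - s, z + s]` around a point `z ∈ [a, b]` leaves
a length between `s` and `2s` as soon as `s ≤ b - a`. Aspect ratio at most 3 gives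
`r/3 ≤ ℓ₂(R)/3 ≤ ℓ₁(R)`, so with `s = r/3` both sides of `Rᵢ` lie in `[r/3, 2r/3]`, whence aspect
ratio at most 2. The side parallel to `E` is at most `ℓ₁(R)` and the orthogonal one at most
`2r/3 ≤ (2/3) ℓ₂(R)`, whence the volume bound.
-/

/-- The length of `[a, b] ∩ [z - s, z + s]`. -/
def clippedLength (a b z s : ℝ) : ℝ := min b (z + s) - max a (z - s)

section clippedLength

variable {a b z s : ℝ}

theorem clippedLength_le_sub : clippedLength a b z s ≤ b - a := by
  unfold clippedLength
  linarith [min_le_left b (z + s), le_max_left a (z - s)]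

theorem clippedLength_le_two_mul : clippedLength a b z s ≤ 2 * s := by
  unfold clippedLength
  linarith [min_le_right b (z + s), le_max_right a (z - s)]

theorem le_clippedLength (hs₀ : 0 ≤ s) (hz : z ∈ Set.Icc a b) (hs : s ≤ b - a) : s ≤ clippedLength a b z s := by
  obtain ⟨hza, hzb⟩ := hz
  unfold clippedLength
  rcases min_cases b (z + s) with ⟨h₁, _⟩ | ⟨h₁, _⟩ <;>
    rcases max_cases a (z - s) with ⟨h₂, _⟩ | ⟨h₂, _⟩ <;> rw [h₁, h₂] <;> linarith

end clippedLength

theorem le_mul_of_max_div_min_le {x y c : ℝ} (hx : 0 < x) (hy : 0 < y)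
    (h : max x y / min x y ≤ c) : y ≤ c * x := by
  have hmin : 0 < min x y := lt_min hx hy
  rw [div_le_iff₀ hmin] at h
  have hc : 0 ≤ c := by
    by_contra! hc
    nlinarith [le_max_left x y]
  calc y ≤ max x y := le_max_right x y
    _ ≤ c * min x y := h
    _ ≤ c * x := mul_le_mul_of_nonneg_left (min_le_left x y) hc

theorem max_div_min_le_two {x y s : ℝ} (hs : 0 < s) (hx : s ≤ x) (hy : s ≤ y)
    (hx' : x ≤ 2 * s) (hy' : y ≤ 2 * s) : max x y / min x y ≤ 2 := by
  have hmin : s ≤ min x y := le_min hx hy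
  rw [div_le_iff₀ (hs.trans_le hmin)]
  linarith [max_le hx' hy']

/-- shrinking in the edge fixing step. `R = [a₁,b₁]×[a₂,b₂]`
has aspect ratio at most 3, the edge `E` is parallel to the first axis and
`r = dist(x,E)` so that `b₂ - a₂ ≥ r`; `Rᵢ = R ∩ {y : ‖z - y‖_∞ ≤ r/3}` for a
point `z ∈ R`. Then `vol(Rᵢ) ≤ (2/3)·vol(R)` and the aspect ratio of `Rᵢ`
is at most 2 (in particular at most 3). -/
theorem stmt14 (a₁ b₁ a₂ b₂ r z₁ z₂ : ℝ)
    (hr : 0 < r)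
    (hz₁ : z₁ ∈ Set.Icc a₁ b₁) (hz₂ : z₂ ∈ Set.Icc a₂ b₂)
    (hℓ₂ : r ≤ b₂ - a₂)
    (haspect : max (b₁ - a₁) (b₂ - a₂) / min (b₁ - a₁) (b₂ - a₂) ≤ 3)
    (hpos : 0 < b₁ - a₁) :
    (min b₁ (z₁ + r/3) - max a₁ (z₁ - r/3)) * (min b₂ (z₂ + r/3) - max a₂ (z₂ - r/3))
        ≤ (2/3) * ((b₁ - a₁) * (b₂ - a₂)) ∧
    max (min b₁ (z₁ + r/3) - max a₁ (z₁ - r/3)) (min b₂ (z₂ + r/3) - max a₂ (z₂ - r/3)) /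
      min (min b₁ (z₁ + r/3) - max a₁ (z₁ - r/3)) (min b₂ (z₂ + r/3) - max a₂ (z₂ - r/3))
        ≤ 2 := by
  change clippedLength a₁ b₁ z₁ (r/3) * clippedLength a₂ b₂ z₂ (r/3) ≤ _ ∧
    max (clippedLength a₁ b₁ z₁ (r/3)) (clippedLength a₂ b₂ z₂ (r/3)) /
      min (clippedLength a₁ b₁ z₁ (r/3)) (clippedLength a₂ b₂ z₂ (r/3)) ≤ 2
  have hℓ₁ : r / 3 ≤ b₁ - a₁ := by
    linarith [le_mul_of_max_div_min_le hpos (hr.trans_le hℓ₂) haspect]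
  have hr₃ : 0 ≤ r / 3 := by positivity
  have hlow₁ := le_clippedLength hr₃ hz₁ hℓ₁
  have hlow₂ := le_clippedLength hr₃ hz₂ (by linarith : r / 3 ≤ b₂ - a₂)
  have hup₁ : clippedLength a₁ b₁ z₁ (r/3) ≤ 2 * (r/3) := clippedLength_le_two_mul
  have hup₂ : clippedLength a₂ b₂ z₂ (r/3) ≤ 2 * (r/3) := clippedLength_le_two_mul
  refine ⟨?_, max_div_min_le_two (by positivity) hlow₁ hlow₂ hup₁ hup₂⟩
  calc clippedLength a₁ b₁ z₁ (r/3) * clippedLength a₂ b₂ z₂ (r/3)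
      ≤ (b₁ - a₁) * (2 * (r/3)) :=
        mul_le_mul clippedLength_le_sub hup₂ (by linarith) hpos.le
    _ ≤ (2/3) * ((b₁ - a₁) * (b₂ - a₂)) := by nlinarith
end

section
/- Let X be a random monotone path of length n on the grid, and suppose that for all i < n and all vertex prefixes, P(X_n = u | X[i] = P[i]) ≤ c/((n−i)·h(n−i)) for every u with ‖u‖₁ = n, where h : ℕ → ℝ is decreasing and positive. Then for every fixed monotone path P, Σ_{i=0}^{n−1} Σ_{Q : Q_n = P_n} P(X = Q | X[i] = P[i]) ≤ c·Σ_{k=1}^{n} 1/(k·h(k)), and consequently Σ_Q w_X(P,Q) ≥ P(X=P)·(n − c·S_h(n)) where S_h(n) = Σ_{k=1}^n 1/(k·h(k)). -/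
open scoped Classical

/-- A monotone path of length `n` on the grid: starts at the origin, moves
up or right for the first `n` steps, and is frozen afterwards. -/
def IsMonoPath (n : ℕ) (p : ℕ → ℤ × ℤ) : Prop :=
  p 0 = (0, 0) ∧
  (∀ i < n, p (i+1) = p i + (0, 1) ∨ p (i+1) = p i + (1, 0)) ∧
  (∀ i, n ≤ i → p (i+1) = p i)

def MonoPath (n : ℕ) := {p : ℕ → ℤ × ℤ // IsMonoPath n p}

/-- `P` and `Q` have the same prefix of the first `i+1` vertices. -/
def agree (n i : ℕ) (P Q : MonoPath n) : Prop := ∀ j ≤ i, P.1 j = Q.1 j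

/-- `ℙ(X[i] = P[i])` for the random path `X` with distribution `p`. -/
noncomputable def prefProb (n : ℕ) (p : MonoPath n → ℝ) (P : MonoPath n)
    (i : ℕ) : ℝ :=
  ∑' Q : MonoPath n, if agree n i P Q then p Q else 0

/-- `ℙ(X = P' ∣ X[i] = P[i])` (with the convention `0/0 = 0`). -/
noncomputable def condProb (n : ℕ) (p : MonoPath n → ℝ) (P' P : MonoPath n)
    (i : ℕ) : ℝ :=
  (if agree n i P P' then p P' else 0) / prefProb n p P i

/-- `ℙ(X_m = u ∣ X[i] = P[i])`. -/
noncomputable def endAtProb (n : ℕ) (p : MonoPath n → ℝ) (P : MonoPath n)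
    (i m : ℕ) (u : ℤ × ℤ) : ℝ :=
  (∑' Q : MonoPath n, if agree n i P Q ∧ Q.1 m = u then p Q else 0) /
    prefProb n p P i

/-- The weight function `w_X(P, P')`. -/
noncomputable def wgt (n : ℕ) (p : MonoPath n → ℝ) (P P' : MonoPath n) : ℝ :=
  if P.1 n = P'.1 n then 0
  else p P * ∑ i ∈ Finset.range n, condProb n p P' P i

/-- `S_h(n) = Σ_{k=1}^n 1/(k·h(k))`. -/
noncomputable def Snh (h : ℕ → ℝ) (n : ℕ) : ℝ :=
  ∑ k ∈ Finset.Icc 1 n, 1 / ((k : ℝ) * h k)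

/-!
For each `i`, the conditional probabilities `ℙ(X = Q ∣ X[i] = P[i])` sum to `1` over all `Q`,
so `Σ_Q w_X(P,Q) = ℙ(X = P)·(n − Σ_{i<n} ℙ(X_n = P_n ∣ X[i] = P[i]))`. The endpoint `P_n` lies
on the sphere `‖u‖₁ = n`, so the unpredictability hypothesis bounds the `i`-th term by
`c/((n−i)·h(n−i))`, and reindexing `k = n − i` turns their sum into `c·S_h(n)`.
-/

open Finset

theorem Finset.sum_range_tsub_eq_sum_Icc {M : Type*} [AddCommMonoid M] (n : ℕ) (f : ℕ → M) :
    ∑ i ∈ range n, f (n - i) = ∑ k ∈ Icc 1 n, f k :=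
  sum_nbij' (n - ·) (n - ·) (by simp; omega) (by simp; omega)
    (by simp; omega) (by simp; omega) (fun _ _ => rfl)

theorem IsMonoPath.coords_of_le {n : ℕ} {p : ℕ → ℤ × ℤ} (hp : IsMonoPath n p) {i : ℕ}
    (hi : i ≤ n) : 0 ≤ (p i).1 ∧ 0 ≤ (p i).2 ∧ (p i).1 + (p i).2 = i := by
  induction i with
  | zero => simp [hp.1]
  | succ i ih =>
    obtain ⟨h1, h2, hsum⟩ := ih (by omega)
    rcases hp.2.1 i (by omega) with h | h <;> simp [h] <;> omega

theorem MonoPath.natAbs_add_natAbs_endpoint {n : ℕ} (P : MonoPath n) :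
    (P.1 n).1.natAbs + (P.1 n).2.natAbs = n := by
  obtain ⟨h1, h2, hsum⟩ := P.2.coords_of_le le_rfl
  omega

section Conditioning

variable {n : ℕ} {p : MonoPath n → ℝ}

theorem agree_refl (i : ℕ) (P : MonoPath n) : agree n i P P := fun _ _ => rfl

theorem summable_ite_agree (hsum : Summable p) (i : ℕ) (P : MonoPath n) :
    Summable fun Q => if agree n i P Q then p Q else 0 :=
  (hsum.indicator {Q | agree n i P Q}).congr fun Q => by simp [Set.indicator]

theorem summable_condProb (hsum : Summable p) (P : MonoPath n) (i : ℕ) :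
    Summable fun Q => condProb n p Q P i :=
  (summable_ite_agree hsum i P).div_const _

theorem le_prefProb (hp : ∀ Q, 0 ≤ p Q) (hsum : Summable p) (P : MonoPath n) (i : ℕ) :
    p P ≤ prefProb n p P i := by
  have h := (summable_ite_agree hsum i P).le_tsum P fun Q _ => by split_ifs <;> simp [hp Q]
  rwa [if_pos (agree_refl i P)] at h

/-- The factor `p P` absorbs the junk value `0/0 = 0` of `condProb` when `ℙ(X = P) = 0`. -/
theorem mul_tsum_condProb (hp : ∀ Q, 0 ≤ p Q) (hsum : Summable p) (P : MonoPath n) (i : ℕ) :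
    p P * ∑' Q, condProb n p Q P i = p P := by
  rcases (hp P).eq_or_lt with hP | hP
  · rw [← hP, zero_mul]
  · have hpref : prefProb n p P i ≠ 0 := (hP.trans_le (le_prefProb hp hsum P i)).ne'
    simp only [condProb, tsum_div_const]
    rw [← prefProb, div_self hpref, mul_one]

theorem tsum_condProb_endpoint_eq_endAtProb (P : MonoPath n) (i : ℕ) :
    ∑' Q : {Q : MonoPath n // Q.1 n = P.1 n}, condProb n p Q.1 P i
      = endAtProb n p P i n (P.1 n) := by
  simp only [condProb, endAtProb, tsum_div_const]
  congr 1
  refine (_root_.tsum_subtype {Q : MonoPath n | Q.1 n = P.1 n}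
    fun Q => if agree n i P Q then p Q else 0).trans (tsum_congr fun Q => ?_)
  by_cases hQ : Q.1 n = P.1 n <;> simp [Set.indicator, hQ]

theorem sum_tsum_condProb_endpoint_le (P : MonoPath n) (b : ℕ → ℝ)
    (hb : ∀ i < n, endAtProb n p P i n (P.1 n) ≤ b (n - i)) :
    ∑ i ∈ range n, ∑' Q : {Q : MonoPath n // Q.1 n = P.1 n}, condProb n p Q.1 P i
      ≤ ∑ k ∈ Icc 1 n, b k := by
  rw [← sum_range_tsub_eq_sum_Icc]
  refine sum_le_sum fun i hi => ?_
  rw [tsum_condProb_endpoint_eq_endAtProb]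
  exact hb i (mem_range.mp hi)

theorem tsum_wgt (hp : ∀ Q, 0 ≤ p Q) (hsum : Summable p) (P : MonoPath n) :
    ∑' Q, wgt n p P Q = p P * (n - ∑ i ∈ range n,
      ∑' Q : {Q : MonoPath n // Q.1 n = P.1 n}, condProb n p Q.1 P i) := by
  set s := {Q : MonoPath n | Q.1 n = P.1 n}
  set F := fun Q => p P * ∑ i ∈ range n, condProb n p Q P i
  have hF : Summable F :=
    (summable_sum fun i _ => summable_condProb hsum P i).mul_left (p P)
  have hwgt : ∀ Q, wgt n p P Q = F Q - s.indicator F Q := by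
    intro Q
    by_cases hQ : P.1 n = Q.1 n
    · simp [wgt, hQ, s]
    · simp [wgt, hQ, s, F, Ne.symm hQ]
  have htotal : ∑' Q, F Q = p P * n := by
    simp only [F]
    rw [tsum_mul_left, Summable.tsum_finsetSum fun i _ => summable_condProb hsum P i, mul_sum]
    simp only [mul_tsum_condProb hp hsum, sum_const, card_range, nsmul_eq_mul, mul_comm]
  have hsame : ∑' Q, s.indicator F Q = p P * ∑ i ∈ range n,
      ∑' Q : {Q : MonoPath n // Q.1 n = P.1 n}, condProb n p Q.1 P i := by
    rw [← _root_.tsum_subtype, tsum_mul_left]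
    exact congrArg _ (Summable.tsum_finsetSum fun i _ => (summable_condProb hsum P i).subtype s)
  rw [tsum_congr hwgt, hF.tsum_sub (hF.indicator s), htotal, hsame, mul_sub]

end Conditioning

theorem stmt18_general (n : ℕ) (p : MonoPath n → ℝ)
    (hp : ∀ P, 0 ≤ p P) (hsum : Summable p)
    (h : ℕ → ℝ)
    (c : ℝ)
    (hunpred : ∀ P : MonoPath n, ∀ i < n, ∀ u : ℤ × ℤ,
      u.1.natAbs + u.2.natAbs = n →
      endAtProb n p P i n u ≤ c / (((n - i : ℕ) : ℝ) * h (n - i)))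
    (P : MonoPath n) :
    (∑ i ∈ Finset.range n,
        ∑' Q : {Q : MonoPath n // Q.1 n = P.1 n}, condProb n p Q.1 P i)
      ≤ c * Snh h n ∧
    p P * ((n : ℝ) - c * Snh h n) ≤ ∑' Q : MonoPath n, wgt n p P Q := by
  have hbound : ∑ i ∈ range n,
      ∑' Q : {Q : MonoPath n // Q.1 n = P.1 n}, condProb n p Q.1 P i ≤ c * Snh h n := by
    rw [Snh, mul_sum]
    refine sum_tsum_condProb_endpoint_le P (fun k => c * (1 / (k * h k))) fun i hi => ?_
    rw [mul_one_div]
    exact hunpred P i hi _ P.natAbs_add_natAbs_endpoint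
  refine ⟨hbound, ?_⟩
  rw [tsum_wgt hp hsum]
  exact mul_le_mul_of_nonneg_left (sub_le_sub_left hbound _) (hp P)

/-- under the unpredictability hypothesis
`ℙ(X_n = u ∣ X[i] = P[i]) ≤ c/((n-i)·h(n-i))`, one has
`Σ_{i<n} Σ_{Q : Q_n = P_n} ℙ(X = Q ∣ X[i] = P[i]) ≤ c·S_h(n)` and hence
`Σ_Q w_X(P,Q) ≥ ℙ(X = P)·(n − c·S_h(n))`. -/
theorem stmt18 (n : ℕ) (p : MonoPath n → ℝ)
    (hp : ∀ P, 0 ≤ p P) (hsum : Summable p) (htot : ∑' P, p P = 1)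
    (h : ℕ → ℝ) (hhpos : ∀ k, 0 < h k) (hhdec : Antitone h)
    (c : ℝ) (hc : 0 ≤ c)
    (hunpred : ∀ P : MonoPath n, ∀ i < n, ∀ u : ℤ × ℤ,
      u.1.natAbs + u.2.natAbs = n →
      endAtProb n p P i n u ≤ c / (((n - i : ℕ) : ℝ) * h (n - i)))
    (P : MonoPath n) :
    (∑ i ∈ Finset.range n,
        ∑' Q : {Q : MonoPath n // Q.1 n = P.1 n}, condProb n p Q.1 P i)
      ≤ c * Snh h n ∧
    p P * ((n : ℝ) - c * Snh h n) ≤ ∑' Q : MonoPath n, wgt n p P Q :=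
  stmt18_general n p hp hsum h c hunpred P
end

section
/- Under the same unpredictability hypothesis on the random monotone path X (P(X_m = u | X[i] fixed) ≤ c/((m−i)·h(m−i)) for i < m), for any fixed monotone path P and any vertex v with ‖v‖₁ = ℓ and P_ℓ ≠ v: Σ_{Q : Q_ℓ = v} w_X(P,Q) ≤ 2·c·P(X=P)·S_h(n). -/
open scoped Classical

/-! A path `Q` with `Q_ℓ = v ≠ P_ℓ` cannot share a prefix of length `i ≥ ℓ` with `P`, so in
`w_X(P, Q)` only the terms `i < ℓ` survive. Summed over all such `Q`, the `i`-th term becomes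
`ℙ(X_ℓ = v ∣ X[i] = P[i]) ≤ c / ((ℓ - i) h(ℓ - i))`, and these bounds add up to `c · S_h(ℓ)`. -/

open Finset

section Probabilities

variable {n : ℕ} {p : MonoPath n → ℝ}

lemma prefProb_nonneg (hp : ∀ P, 0 ≤ p P) (P : MonoPath n) (i : ℕ) :
    0 ≤ prefProb n p P i :=
  tsum_nonneg fun Q => by split <;> simp [hp]

lemma condProb_nonneg (hp : ∀ P, 0 ≤ p P) (Q P : MonoPath n) (i : ℕ) :
    0 ≤ condProb n p Q P i :=
  div_nonneg (by split <;> simp [hp]) (prefProb_nonneg hp P i)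

lemma condProb_eq_zero_of_ne {Q P : MonoPath n} {ℓ i : ℕ} (hℓi : ℓ ≤ i) (hPQ : P.1 ℓ ≠ Q.1 ℓ) :
    condProb n p Q P i = 0 := by
  rw [condProb, if_neg fun hagree => hPQ (hagree ℓ hℓi), zero_div]

lemma wgt_le_sum_condProb (hp : ∀ P, 0 ≤ p P) {P Q : MonoPath n} {ℓ : ℕ} (hℓ : ℓ ≤ n)
    (hPQ : P.1 ℓ ≠ Q.1 ℓ) :
    wgt n p P Q ≤ p P * ∑ i ∈ range ℓ, condProb n p Q P i := by
  have hnonneg : 0 ≤ p P * ∑ i ∈ range n, condProb n p Q P i :=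
    mul_nonneg (hp P) (sum_nonneg fun i _ => condProb_nonneg hp Q P i)
  have hvanish : ∀ i ∈ range n, i ∉ range ℓ → condProb n p Q P i = 0 := fun i _ hi =>
    condProb_eq_zero_of_ne (not_lt.mp (mem_range.not.mp hi)) hPQ
  rw [sum_subset (range_subset_range.mpr hℓ) hvanish]
  unfold wgt
  split_ifs
  · exact hnonneg
  · exact le_rfl

lemma wgt_nonneg (hp : ∀ P, 0 ≤ p P) (P Q : MonoPath n) : 0 ≤ wgt n p P Q := by
  unfold wgt
  split_ifs
  · exact le_rfl
  · exact mul_nonneg (hp P) (sum_nonneg fun i _ => condProb_nonneg hp Q P i)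

lemma hasSum_condProb_endAtProb (hp : ∀ P, 0 ≤ p P) (hsum : Summable p) (P : MonoPath n)
    (i m : ℕ) (u : ℤ × ℤ) :
    HasSum (fun Q : {Q : MonoPath n // Q.1 m = u} => condProb n p Q.1 P i)
      (endAtProb n p P i m u) := by
  let f : MonoPath n → ℝ := fun Q => if agree n i P Q then p Q else 0
  have hind : {Q : MonoPath n | Q.1 m = u}.indicator f =
      fun Q => if agree n i P Q ∧ Q.1 m = u then p Q else 0 := by
    ext Q
    by_cases hQ : Q.1 m = u <;> simp [Set.indicator, f, hQ]
  have hsub : HasSum (f ∘ Subtype.val : {Q : MonoPath n // Q.1 m = u} → ℝ)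
      (∑' Q : MonoPath n, if agree n i P Q ∧ Q.1 m = u then p Q else 0) := by
    refine (hasSum_subtype_iff_indicator (s := {Q : MonoPath n | Q.1 m = u})).mpr ?_
    rw [hind]
    refine (Summable.of_nonneg_of_le (fun Q => ?_) (fun Q => ?_) hsum).hasSum <;>
      split_ifs <;> simp [hp]
  exact hsub.div_const _

end Probabilities

lemma Snh_nonneg {h : ℕ → ℝ} (hh : ∀ k, 0 ≤ h k) (n : ℕ) : 0 ≤ Snh h n :=
  sum_nonneg fun k _ => one_div_nonneg.mpr (mul_nonneg k.cast_nonneg (hh k))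

lemma Snh_mono {h : ℕ → ℝ} (hh : ∀ k, 0 ≤ h k) {m n : ℕ} (hmn : m ≤ n) : Snh h m ≤ Snh h n :=
  sum_le_sum_of_subset_of_nonneg (Icc_subset_Icc_right hmn) fun k _ _ =>
    one_div_nonneg.mpr (mul_nonneg k.cast_nonneg (hh k))

lemma Snh_eq_sum_range_sub (h : ℕ → ℝ) (ℓ : ℕ) :
    Snh h ℓ = ∑ i ∈ range ℓ, 1 / (((ℓ - i : ℕ) : ℝ) * h (ℓ - i)) :=
  sum_nbij' (fun k => ℓ - k) (fun i => ℓ - i)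
    (fun k hk => by simp only [mem_Icc, mem_range] at hk ⊢; omega)
    (fun i hi => by simp only [mem_Icc, mem_range] at hi ⊢; omega)
    (fun k hk => by simp only [mem_Icc] at hk; omega)
    (fun i hi => by simp only [mem_range] at hi; omega)
    (fun k hk => by
      simp only [mem_Icc] at hk
      rw [Nat.sub_sub_self hk.2])

theorem stmt19_general (n : ℕ) (p : MonoPath n → ℝ)
    (hp : ∀ P, 0 ≤ p P) (hsum : Summable p)
    (h : ℕ → ℝ) (hhpos : ∀ k, 0 < h k)
    (c : ℝ) (hc : 0 ≤ c)
    (hunpred : ∀ P : MonoPath n, ∀ i m : ℕ, i < m → m ≤ n →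
      ∀ u : ℤ × ℤ, u.1.natAbs + u.2.natAbs = m →
      endAtProb n p P i m u ≤ c / (((m - i : ℕ) : ℝ) * h (m - i)))
    (P : MonoPath n) (ℓ : ℕ) (hℓ : ℓ < n) (v : ℤ × ℤ)
    (hv : v.1.natAbs + v.2.natAbs = ℓ)
    (hPv : P.1 ℓ ≠ v) :
    ∑' Q : {Q : MonoPath n // Q.1 ℓ = v}, wgt n p P Q.1
      ≤ 2 * c * p P * Snh h n := by
  have hbound : HasSum (fun Q : {Q : MonoPath n // Q.1 ℓ = v} =>
      p P * ∑ i ∈ range ℓ, condProb n p Q.1 P i) (p P * ∑ i ∈ range ℓ, endAtProb n p P i ℓ v) :=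
    (hasSum_sum fun i _ => hasSum_condProb_endAtProb hp hsum P i ℓ v).mul_left (p P)
  have hwgt : ∀ Q : {Q : MonoPath n // Q.1 ℓ = v},
      wgt n p P Q.1 ≤ p P * ∑ i ∈ range ℓ, condProb n p Q.1 P i := fun Q =>
    wgt_le_sum_condProb hp hℓ.le fun hPQ => hPv (hPQ.trans Q.2)
  have hsummable : Summable fun Q : {Q : MonoPath n // Q.1 ℓ = v} => wgt n p P Q.1 :=
    .of_nonneg_of_le (fun Q => wgt_nonneg hp P Q.1) hwgt hbound.summable
  have hendAt : ∑ i ∈ range ℓ, endAtProb n p P i ℓ v ≤ c * Snh h ℓ := by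
    rw [Snh_eq_sum_range_sub, mul_sum]
    refine sum_le_sum fun i hi => ?_
    rw [mul_one_div]
    exact hunpred P i ℓ (mem_range.mp hi) hℓ.le v hv
  have hh : ∀ k, 0 ≤ h k := fun k => (hhpos k).le
  have hSnh := mul_le_mul_of_nonneg_left (Snh_mono hh hℓ.le) hc
  have hpos := mul_nonneg (mul_nonneg hc (hp P)) (Snh_nonneg hh n)
  calc ∑' Q : {Q : MonoPath n // Q.1 ℓ = v}, wgt n p P Q.1
      ≤ p P * ∑ i ∈ range ℓ, endAtProb n p P i ℓ v := hasSum_le hwgt hsummable.hasSum hbound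
    _ ≤ p P * (c * Snh h n) := mul_le_mul_of_nonneg_left (hendAt.trans hSnh) (hp P)
    _ ≤ 2 * c * p P * Snh h n := by linarith

/-- under the unpredictability hypothesis
`ℙ(X_m = u ∣ X[i] = P[i]) ≤ c/((m-i)·h(m-i))` for `i < m ≤ n`, for any fixed
monotone path `P` and grid vertex `v` with `‖v‖₁ = ℓ` and `P_ℓ ≠ v`,
`Σ_{Q : Q_ℓ = v} w_X(P,Q) ≤ 2·c·ℙ(X = P)·S_h(n)`. -/
theorem stmt19 (n : ℕ) (p : MonoPath n → ℝ)
    (hp : ∀ P, 0 ≤ p P) (hsum : Summable p) (htot : ∑' P, p P = 1)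
    (h : ℕ → ℝ) (hhpos : ∀ k, 0 < h k) (hhdec : Antitone h)
    (c : ℝ) (hc : 0 ≤ c)
    (hunpred : ∀ P : MonoPath n, ∀ i m : ℕ, i < m → m ≤ n →
      ∀ u : ℤ × ℤ, u.1.natAbs + u.2.natAbs = m →
      endAtProb n p P i m u ≤ c / (((m - i : ℕ) : ℝ) * h (m - i)))
    (P : MonoPath n) (ℓ : ℕ) (hℓ : ℓ < n) (v : ℤ × ℤ)
    (hv0 : 0 ≤ v.1 ∧ 0 ≤ v.2) (hv : v.1.natAbs + v.2.natAbs = ℓ)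
    (hPv : P.1 ℓ ≠ v) :
    ∑' Q : {Q : MonoPath n // Q.1 ℓ = v}, wgt n p P Q.1
      ≤ 2 * c * p P * Snh h n :=
  stmt19_general n p hp hsum h hhpos c hc hunpred P ℓ hℓ v hv hPv
end
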